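/- arXiv:1908.10054 — 4 statements merged into one kernel-verified Lean document; each statement's English description precedes it below -/
import Mathlib

section
/- Let g, b, F be real numbers with g > 0, b > 0 and b² ≥ F² + 2gF. Then for each σ ∈ {−1, +1}, the number α_σ = (g·b)/(g² + b²) · ( b − (g/b)·F − σ·√(b² − F² − 2gF) ) satisfies the equation ((F + α_σ)/b)² + (α_σ/g − 1)² = 1. -/
/-!
Clearing denominators, the flow-loss equation is the quadratic
`(g² + b²) α² + 2g(gF - b²) α + g²F² = 0` in `α`, whose discriminant is
`(2gb)² (b² - F² - 2gF)`. The two branches `σ = ±1` of the explicit formula are exactly the two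
roots given by the quadratic formula.
-/

section FlowLoss

variable {K : Type*} [Field K]

theorem flow_loss_eq_one_iff {g b : K} (hg : g ≠ 0) (hb : b ≠ 0) (F α : K) :
    ((F + α) / b) ^ 2 + (α / g - 1) ^ 2 = 1 ↔
      (g ^ 2 + b ^ 2) * (α * α) + 2 * g * (g * F - b ^ 2) * α + g ^ 2 * F ^ 2 = 0 := by
  have hgb : g ^ 2 * b ^ 2 ≠ 0 := by positivity
  rw [← sub_eq_zero, ← mul_eq_zero_iff_right hgb]
  constructor <;> intro h <;> field_simp at h ⊢ <;> linear_combination h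

theorem discrim_flow_loss (g b F : K) :
    discrim (g ^ 2 + b ^ 2) (2 * g * (g * F - b ^ 2)) (g ^ 2 * F ^ 2) =
      (2 * g * b) ^ 2 * (b ^ 2 - F ^ 2 - 2 * g * F) := by
  rw [discrim]; ring

theorem flow_loss_eq_one_of_branch [NeZero (2 : K)] {g b F S σ α : K} (hg : g ≠ 0)
    (hb : b ≠ 0) (hgb : g ^ 2 + b ^ 2 ≠ 0) (hS : S * S = b ^ 2 - F ^ 2 - 2 * g * F)
    (hσ : σ * σ = 1) (hα : α = g * b / (g ^ 2 + b ^ 2) * (b - g / b * F - σ * S)) :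
    ((F + α) / b) ^ 2 + (α / g - 1) ^ 2 = 1 := by
  have hdisc : discrim (g ^ 2 + b ^ 2) (2 * g * (g * F - b ^ 2)) (g ^ 2 * F ^ 2) =
      (σ * (2 * g * b * S)) * (σ * (2 * g * b * S)) := by
    rw [discrim_flow_loss]
    linear_combination (-(2 * g * b) ^ 2) * hS - (2 * g * b * S) ^ 2 * hσ
  rw [flow_loss_eq_one_iff hg hb, quadratic_eq_zero_iff hgb hdisc]
  right
  rw [hα]
  field_simp
  ring

end FlowLoss

/-- Both branches of the explicit solution formula solve the flow-loss equation. -/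
theorem flow_loss_branches_solve (g b F : ℝ) (hg : 0 < g) (hb : 0 < b)
    (h : b ^ 2 ≥ F ^ 2 + 2 * g * F) :
    ∀ σ : ℝ, σ = -1 ∨ σ = 1 →
      ((F + (g * b / (g ^ 2 + b ^ 2)) *
          (b - (g / b) * F - σ * Real.sqrt (b ^ 2 - F ^ 2 - 2 * g * F))) / b) ^ 2 +
        (((g * b / (g ^ 2 + b ^ 2)) *
          (b - (g / b) * F - σ * Real.sqrt (b ^ 2 - F ^ 2 - 2 * g * F))) / g - 1) ^ 2 = 1 := by
  intro σ hσ
  have hσσ : σ * σ = 1 := by rcases hσ with rfl | rfl <;> norm_num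
  have hS := Real.mul_self_sqrt (show 0 ≤ b ^ 2 - F ^ 2 - 2 * g * F by linarith)
  exact flow_loss_eq_one_of_branch hg.ne' hb.ne' (by positivity) hS hσσ rfl
end

section
/- Let g, b, F be real numbers with g > 0, b > 0 and b² ≥ F² + 2gF. Then both roots α of the quadratic ((F + α)/b)² + (α/g − 1)² = 1 are nonnegative. -/
/-- Both roots of the flow-loss quadratic are nonnegative: losses are nonnegative. -/
theorem flow_loss_roots_nonneg (g b F : ℝ) (hg : 0 < g) (hb : 0 < b)
    (h : b ^ 2 ≥ F ^ 2 + 2 * g * F) :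
    ∀ α : ℝ, ((F + α) / b) ^ 2 + (α / g - 1) ^ 2 = 1 → 0 ≤ α := by
  intro α hα
  by_contra hneg
  push_neg at hneg
  have hgb : b ^ 2 - g * F ≥ 0 := by nlinarith [sq_nonneg F, sq_nonneg (F + g)]
  have key : α ^ 2 * (g ^ 2 + b ^ 2) + 2 * g * α * (F * g - b ^ 2) + g ^ 2 * F ^ 2 = 0 := by
    field_simp at hα
    nlinarith [hα]
  have h1 : 0 < α ^ 2 := by nlinarith
  have h2 : 0 ≤ (-α) * (g * (b ^ 2 - F * g)) := by
    apply mul_nonneg (by linarith)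
    apply mul_nonneg hg.le
    nlinarith
  nlinarith [mul_pos h1 (by positivity : (0:ℝ) < g ^ 2 + b ^ 2), sq_nonneg (g * F)]
end

section
/- Let b > 0, g > 0, and let F, L be real numbers satisfying (F/b)² + (L/g − 1)² = 1. Define Δ = arcsin(F/b) if L ≤ g and Δ = π − arcsin(F/b) if L > g. Then b sin(Δ) = F and g(1 − cos(Δ)) = L. -/
open Real

namespace Real

variable {x y : ℝ}

theorem sin_arcsin_of_sq_add_sq_eq_one (h : x ^ 2 + y ^ 2 = 1) : sin (arcsin x) = x := by
  have hx : |x| ≤ 1 := (sq_le_one_iff_abs_le_one x).mp (by nlinarith [sq_nonneg y])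
  exact sin_arcsin (abs_le.mp hx).1 (abs_le.mp hx).2

theorem cos_arcsin_of_sq_add_sq_eq_one (h : x ^ 2 + y ^ 2 = 1) : cos (arcsin x) = |y| := by
  rw [cos_arcsin, show 1 - x ^ 2 = y ^ 2 by linarith, sqrt_sq_eq_abs]

end Real

/-- Reconstruction of the phase difference from the pair (flow, loss)
satisfying the flow-loss condition. -/
theorem phase_from_flow_loss (b g F L : ℝ) (hb : 0 < b) (hg : 0 < g)
    (h : (F / b) ^ 2 + (L / g - 1) ^ 2 = 1) :
    (L ≤ g → b * Real.sin (Real.arcsin (F / b)) = F ∧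
      g * (1 - Real.cos (Real.arcsin (F / b))) = L) ∧
    (L > g → b * Real.sin (Real.pi - Real.arcsin (F / b)) = F ∧
      g * (1 - Real.cos (Real.pi - Real.arcsin (F / b))) = L) := by
  have hsin : b * sin (arcsin (F / b)) = F := by
    rw [sin_arcsin_of_sq_add_sq_eq_one h, mul_div_cancel₀ F hb.ne']
  have hcos := cos_arcsin_of_sq_add_sq_eq_one h
  have hloss : g * (L / g) = L := mul_div_cancel₀ L hg.ne'
  refine ⟨fun hL => ⟨hsin, ?_⟩, fun hL => ⟨by rwa [sin_pi_sub], ?_⟩⟩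
  · have : L / g ≤ 1 := (div_le_one hg).mpr hL
    rw [hcos, abs_of_nonpos (by linarith)]
    linear_combination hloss
  · have : 1 ≤ L / g := (one_le_div hg).mpr hL.le
    rw [cos_pi_sub, hcos, abs_of_nonneg (by linarith)]
    linear_combination hloss
end

section
/- Consider the cycle graph on N nodes with edges e = (e, e+1) for e < N and edge N = (N, 1), oriented forward, and let 𝓘 ∈ ℝ^{(N−1)×2N} be the dynamic-condition matrix (signed incidence concatenated with unsigned incidence, slack row removed). Then the N + 1 vectors x^{(e)} (for e = 1,…,N), with flow components F^{(e)}_k = 2 for k < e, 1 for k = e, 0 for k > e, and loss components L^{(e)}_k = δ_{e,k}, together with x^{(N+1)} = (1,…,1, 0,…,0)ᵀ (ones in all N flow components, zeros in all loss components), form a basis of the kernel of 𝓘. -/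
/-- For the single cycle on `N` nodes, the `N + 1` vectors consisting of a unit
loss on one edge compensated by flows from the slack node, together with the
lossless cycle flow, form a basis of the kernel of the dynamic-condition
matrix `𝓘`. -/
theorem cycle_kernel_basis (N : ℕ) [NeZero N] (hN : 3 ≤ N)
    (I : Matrix (Fin N) (Fin N) ℝ)
    (hI : ∀ (j e : Fin N), I j e = (if j = e then (1 : ℝ) else 0) -
      (if j = e + 1 then (1 : ℝ) else 0))
    (𝓘 : Matrix {j : Fin N // j ≠ 0} (Fin N ⊕ Fin N) ℝ)
    (h𝓘 : ∀ j c, 𝓘 j c = Sum.elim (fun e => I j.val e) (fun e => |I j.val e|) c)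
    (x : Fin (N + 1) → (Fin N ⊕ Fin N → ℝ))
    (hx : ∀ i, x i = Sum.elim
      (fun k : Fin N => if (i : ℕ) = N then (1 : ℝ)
        else if (k : ℕ) < (i : ℕ) then 2 else if (k : ℕ) = (i : ℕ) then 1 else 0)
      (fun k : Fin N => if (k : ℕ) = (i : ℕ) then (1 : ℝ) else 0)) :
    (∀ i, x i ∈ LinearMap.ker 𝓘.mulVecLin) ∧
    LinearIndependent ℝ x ∧
    Submodule.span ℝ (Set.range x) = LinearMap.ker 𝓘.mulVecLin := by
  -- Row formula for the matrix
  have hrow : ∀ (v : Fin N ⊕ Fin N → ℝ) (j : {j : Fin N // j ≠ 0}),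
      𝓘.mulVecLin v j = v (Sum.inl j.1) - v (Sum.inl (j.1 - 1))
        + (v (Sum.inr j.1) + v (Sum.inr (j.1 - 1))) := by
    intro v j
    have key : ∀ e : Fin N, ((j : Fin N) = e + 1) ↔ (e = (j : Fin N) - 1) := fun e => by
      rw [eq_comm]
      exact (eq_sub_iff_add_eq).symm
    have habs : ∀ e : Fin N, |I (↑j) e| =
        (if (↑j : Fin N) = e then (1:ℝ) else 0) + (if (↑j : Fin N) = e + 1 then 1 else 0) := by
      intro e
      rw [hI]
      by_cases h1 : (↑j : Fin N) = e <;> by_cases h2 : (↑j : Fin N) = e + 1 <;>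
        simp [h1, h2, show N ≠ 1 by omega]
    simp only [Matrix.mulVecLin_apply, Matrix.mulVec, dotProduct]
    rw [Fintype.sum_sum_type]
    simp only [h𝓘, Sum.elim_inl, Sum.elim_inr]
    simp only [habs]
    simp only [hI, key]
    simp only [sub_mul, add_mul, ite_mul, one_mul, zero_mul, Finset.sum_sub_distrib,
      Finset.sum_add_distrib, Finset.sum_ite_eq, Finset.sum_ite_eq', Finset.mem_univ, if_true]
  -- Kernel membership criterion
  have hker : ∀ v : Fin N ⊕ Fin N → ℝ, v ∈ LinearMap.ker 𝓘.mulVecLin ↔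
      ∀ j : {j : Fin N // j ≠ 0}, v (Sum.inl j.1) - v (Sum.inl (j.1 - 1))
        + (v (Sum.inr j.1) + v (Sum.inr (j.1 - 1))) = 0 := by
    intro v
    rw [LinearMap.mem_ker, funext_iff]
    simp only [Pi.zero_apply, hrow]
  have hvpos : ∀ j : Fin N, j ≠ 0 → 0 < (j : ℕ) := by
    intro j hj
    exact Nat.pos_of_ne_zero (fun h => hj (Fin.ext (by simpa using h)))
  -- coercion of j - 1
  have hsub : ∀ j : Fin N, j ≠ 0 → ((j - 1 : Fin N) : ℕ) = (j : ℕ) - 1 := by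
    intro j hj
    have h3 := hvpos j hj
    have h1 := j.isLt
    rw [Fin.sub_def]
    simp only [Fin.val_one']
    rw [Nat.mod_eq_of_lt (by omega : 1 < N)]
    rw [show N - 1 + (j : ℕ) = ((j : ℕ) - 1) + N by omega, Nat.add_mod_right,
      Nat.mod_eq_of_lt (by omega)]
  -- Part 1: membership
  have hmem : ∀ i, x i ∈ LinearMap.ker 𝓘.mulVecLin := by
    intro i
    rw [hker]
    rintro ⟨j, hj⟩
    simp only [hx, Sum.elim_inl, Sum.elim_inr]
    rw [hsub j hj]
    have h1 := j.isLt
    have h2 := i.isLt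
    have h3 := hvpos j hj
    split_ifs <;> first | (exfalso; omega) | norm_num
  refine ⟨hmem, ?_, ?_⟩
  -- Part 2: linear independence
  · rw [Fintype.linearIndependent_iff]
    intro g hg i
    have hR : ∀ k : Fin N, g (Fin.castSucc k) = 0 := by
      intro k
      have h0 := congrFun hg (Sum.inr k)
      simp only [Finset.sum_apply, Pi.smul_apply, hx, Sum.elim_inr, smul_eq_mul,
        Pi.zero_apply] at h0
      have hcond : ∀ i' : Fin (N+1), ((k:ℕ) = (i':ℕ)) ↔ Fin.castSucc k = i' := by
        intro i'
        rw [Fin.ext_iff, Fin.coe_castSucc]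
      simp only [hcond, mul_ite, mul_one, mul_zero, Finset.sum_ite_eq,
        Finset.mem_univ, if_true] at h0
      exact h0
    by_cases hi : (i : ℕ) < N
    · have : i = Fin.castSucc ⟨(i : ℕ), hi⟩ := Fin.ext (by simp)
      rw [this]
      exact hR _
    · have h0 := congrFun hg (Sum.inl 0)
      simp only [Finset.sum_apply, Pi.smul_apply, hx, Sum.elim_inl, smul_eq_mul,
        Pi.zero_apply] at h0
      rw [Fin.sum_univ_castSucc] at h0
      rw [Finset.sum_eq_zero (fun k _ => by rw [hR k, zero_mul]), zero_add,
        Fin.val_last, if_pos rfl, mul_one] at h0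
      have hlast : i = Fin.last N := Fin.ext (by simp; omega)
      rw [hlast]
      exact h0
  -- Part 3: span = kernel
  · apply le_antisymm
    · rw [Submodule.span_le]
      rintro _ ⟨i, rfl⟩
      exact hmem i
    · intro v hv
      rw [hker] at hv
      set c : ℝ := v (Sum.inl ⟨N - 1, by omega⟩) - v (Sum.inr ⟨N - 1, by omega⟩) with hc
      -- downward induction claim
      have main : ∀ d : ℕ, ∀ k : Fin N, N - 1 - (k : ℕ) ≤ d →
          v (Sum.inl k) = 2 * (∑ k' : Fin N, if (k:ℕ) < (k':ℕ) then v (Sum.inr k') else 0)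
            + v (Sum.inr k) + c := by
        intro d
        induction d with
        | zero =>
          intro k hk
          have hk' : (k : ℕ) = N - 1 := by have := k.isLt; omega
          rw [Finset.sum_eq_zero (fun k' _ => if_neg (by have := k'.isLt; omega))]
          have hkeq : k = ⟨N - 1, by omega⟩ := Fin.ext hk'
          rw [hkeq, hc]
          ring
        | succ d ih =>
          intro k hk
          by_cases h : N - 1 - (k : ℕ) ≤ d
          · exact ih k h
          · have hkv : (k : ℕ) < N - 1 := by have := k.isLt; omega
            set j : Fin N := ⟨(k : ℕ) + 1, by omega⟩ with hjdef
            have hj0 : j ≠ 0 := by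
              intro h'
              have := congrArg Fin.val h'
              simp [hjdef] at this
            have hj1 : j - 1 = k := by
              apply Fin.ext
              rw [hsub j hj0]
              simp [hjdef]
            have hIH := ih j (by simp [hjdef]; omega)
            have hsum : (∑ k' : Fin N, if (k:ℕ) < (k':ℕ) then v (Sum.inr k') else 0)
                = (∑ k' : Fin N, if (j:ℕ) < (k':ℕ) then v (Sum.inr k') else 0)
                  + v (Sum.inr j) := by
              rw [show v (Sum.inr j) = ∑ k' : Fin N, if k' = j then v (Sum.inr k') else 0
                  from by simp, ← Finset.sum_add_distrib]
              apply Finset.sum_congr rfl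
              intro k' _
              have hjv : (j : ℕ) = (k : ℕ) + 1 := rfl
              by_cases hA : (j:ℕ) < (k':ℕ) <;> by_cases hB : k' = j <;>
                [skip; skip; skip; skip]
              · exfalso; rw [hB] at hA; omega
              · rw [if_pos (by omega), if_pos hA, if_neg hB, add_zero]
              · rw [if_pos (by rw [hB, hjv]; omega), if_neg hA, if_pos hB, zero_add]
              · rw [if_neg (by
                  intro hlt
                  have : (k' : ℕ) = (j : ℕ) := by omega
                  exact hB (Fin.ext this)), if_neg hA, if_neg hB, add_zero]
            have hrec := hv ⟨j, hj0⟩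
            rw [hj1] at hrec
            have hFk : v (Sum.inl k) = v (Sum.inl j) + v (Sum.inr j) + v (Sum.inr k) := by
              simp only at hrec
              linarith
            rw [hFk, hIH, hsum]
            ring
      have hF : ∀ k : Fin N, v (Sum.inl k) =
          2 * (∑ k' : Fin N, if (k:ℕ) < (k':ℕ) then v (Sum.inr k') else 0)
            + v (Sum.inr k) + c := fun k => main (N - 1 - (k : ℕ)) k le_rfl
      -- express v as a combination
      set coef : Fin (N + 1) → ℝ :=
        fun i => if h : (i : ℕ) < N then v (Sum.inr ⟨(i : ℕ), h⟩) else c with hcoef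
      have hvsum : v = ∑ i, coef i • x i := by
        funext s
        rw [Finset.sum_apply]
        simp only [Pi.smul_apply, smul_eq_mul]
        rw [Fin.sum_univ_castSucc]
        have hclast : coef (Fin.last N) = c := by
          rw [hcoef]; simp
        have hccast : ∀ k' : Fin N, coef (Fin.castSucc k') = v (Sum.inr k') := by
          intro k'
          rw [hcoef]
          simp
        cases s with
        | inl k =>
          simp only [hx, Sum.elim_inl, Fin.coe_castSucc, Fin.val_last, hclast, hccast,
            if_true, eq_self_iff_true, mul_one]
          rw [Finset.sum_congr rfl (fun k' _ => show
              v (Sum.inr k') * (if (k':ℕ) = N then (1:ℝ) else if (k:ℕ) < (k':ℕ) then 2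
                else if (k:ℕ) = (k':ℕ) then 1 else 0)
              = 2 * (if (k:ℕ) < (k':ℕ) then v (Sum.inr k') else 0)
                + (if k' = k then v (Sum.inr k') else 0) from by
            have h1 := k'.isLt
            simp only [Fin.ext_iff]
            split_ifs <;> first | (exfalso; omega) | ring)]
          rw [Finset.sum_add_distrib, ← Finset.mul_sum]
          simp only [Finset.sum_ite_eq', Finset.mem_univ, if_true]
          rw [hF k]
        | inr k =>
          simp only [hx, Sum.elim_inr, Fin.coe_castSucc, Fin.val_last, hclast, hccast]
          rw [if_neg (by have := k.isLt; omega), mul_zero, add_zero]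
          have hcond : ∀ k' : Fin N, ((k:ℕ) = (k':ℕ)) ↔ k = k' :=
            fun k' => (Fin.ext_iff).symm
          simp only [hcond, mul_ite, mul_one, mul_zero]
          rw [Finset.sum_congr rfl (fun k' _ => show
              (if k = k' then v (Sum.inr k') else 0) = if k = k' then v (Sum.inr k) else 0
              from by by_cases h : k = k' <;> simp [h])]
          simp only [Finset.sum_ite_eq, Finset.mem_univ, if_true]
      rw [hvsum]
      exact Submodule.sum_mem _ (fun i _ =>
        Submodule.smul_mem _ _ (Submodule.subset_span ⟨i, rfl⟩))
end
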